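/- arXiv:1012.5447 — 5 statements merged into one kernel-verified Lean document; each statement's English description precedes it below -/
import Mathlib

section
/- A non-decreasing sequence of integers B = [b_1, b_2, ..., b_n] is the imbalance sequence of some r-digraph if and only if for every k with 1 ≤ k ≤ n, the partial sum b_1 + ... + b_k ≥ r·k·(k−n), with equality when k = n. -/
/-!
An `r`-digraph `A` gives the skew-symmetric integer flow `c = A - Aᵀ ≤ r`, whose net outflows are
the imbalances, and conversely the positive part of such a flow is an `r`-digraph. Arcs inside a
vertex set `S` cancel and each pair leaving `S` contributes at least `-r`, so
`∑_{S} b ≥ -r |S| |Sᶜ|`; for a sorted sequence the first `k` entries have the least sum among all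
`k`-sets, which gives necessity. Conversely, take a flow minimising `∑ |b x - netFlow x|`. If some
vertex `v` still has negative excess, either a residual walk leads to it from a vertex of positive
excess, and augmenting along it lowers the defect, or the set of vertices with a residual walk to
`v` receives `r` along every pair entering it and has negative total excess, violating the bound
for that set.
-/

open Finset

/-- An `r`-digraph on `n` vertices: `A i j` is the number of arcs from `i` to `j`;
no loops, and at most `r` arcs (both directions counted) between any two distinct vertices. -/
def IsRDigraph (n r : ℕ) (A : Fin n → Fin n → ℕ) : Prop :=
  (∀ i, A i i = 0) ∧ ∀ i j, i ≠ j → A i j + A j i ≤ r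

/-- Imbalance of a vertex: outdegree minus indegree. -/
def imbalance {n : ℕ} (A : Fin n → Fin n → ℕ) (v : Fin n) : ℤ :=
  (∑ j, (A v j : ℤ)) - ∑ j, (A j v : ℤ)

/-- `b` lists the vertex imbalances of `A` (in some order given by a permutation). -/
def IsImbalanceSeq (n r : ℕ) (A : Fin n → Fin n → ℕ) (b : Fin n → ℤ) : Prop :=
  IsRDigraph n r A ∧ ∃ σ : Equiv.Perm (Fin n), ∀ i, b i = imbalance A (σ i)

/-- Sum of the first `k` entries of `b`. -/
def psum {n : ℕ} (b : Fin n → ℤ) (k : ℕ) : ℤ :=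
  ∑ i ∈ Finset.univ.filter (fun i : Fin n => (i : ℕ) < k), b i

open Relation

theorem Relation.ReflTransGen.exists_head_avoiding {α : Type*} {R : α → α → Prop} {a b : α}
    (h : ReflTransGen R a b) (hba : b ≠ a) :
    ∃ w, w ≠ a ∧ R a w ∧ ReflTransGen (fun x y => R x y ∧ x ≠ a) w b := by
  induction h with
  | refl => exact absurd rfl hba
  | @tail x y _ hxy ih =>
    by_cases hxa : x = a
    · subst hxa
      exact ⟨y, hba, hxy, .refl⟩
    · obtain ⟨w, hwa, haw, hwx⟩ := ih hxa
      exact ⟨w, hwa, haw, hwx.tail ⟨hxy, hxa⟩⟩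

theorem Finset.sum_le_sum_of_card_eq {ι M : Type*} [DecidableEq ι] [AddCommGroup M] [LinearOrder M]
    [IsOrderedAddMonoid M] {s t : Finset ι} {f : ι → M} (hst : #s = #t)
    (h : ∀ i ∈ s \ t, ∀ j ∈ t \ s, f i ≤ f j) : ∑ i ∈ s, f i ≤ ∑ i ∈ t, f i := by
  rw [← sum_sdiff_le_sum_sdiff]
  rcases (s \ t).eq_empty_or_nonempty with hs | hs
  · have ht : t \ s = ∅ := card_eq_zero.1 (by rw [← card_sdiff_comm hst, hs, card_empty])
    simp [hs, ht]
  · obtain ⟨i, hi, hmax⟩ := exists_max_image (s \ t) f hs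
    calc ∑ x ∈ s \ t, f x ≤ #(s \ t) • f i := sum_le_card_nsmul _ _ _ hmax
      _ = #(t \ s) • f i := by rw [card_sdiff_comm hst]
      _ ≤ ∑ x ∈ t \ s, f x := card_nsmul_le_sum _ _ _ fun j hj => h i hi j hj

section SkewFlow

variable {V : Type*} {r : ℕ} {b : V → ℤ} {c : V → V → ℤ}

def IsSkewFlow (r : ℕ) (c : V → V → ℤ) : Prop :=
  (∀ x y, c y x = -c x y) ∧ ∀ x y, c x y ≤ r

def augment [DecidableEq V] (c : V → V → ℤ) (u w : V) : V → V → ℤ :=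
  fun x y => c x y + (if x = u ∧ y = w then 1 else 0) - (if x = w ∧ y = u then 1 else 0)

theorem isSkewFlow_augment [DecidableEq V] {u w : V} (hc : IsSkewFlow r c) (huw : u ≠ w)
    (h : c u w < r) : IsSkewFlow r (augment c u w) := by
  refine ⟨fun x y => ?_, fun x y => ?_⟩
  · have := hc.1 x y
    grind [augment]
  · have := hc.2 x y
    grind [augment]

theorem augment_le_of_ne [DecidableEq V] {u w x : V} (hx : x ≠ u) (y : V) :
    augment c u w x y ≤ c x y := by
  simp only [augment, hx, false_and, if_false, add_zero]
  split_ifs <;> omega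

theorem sum_sum_eq_zero_of_skew (hc : ∀ x y, c y x = -c x y) (S : Finset V) :
    ∑ x ∈ S, ∑ y ∈ S, c x y = 0 := by
  have h : ∑ x ∈ S, ∑ y ∈ S, c x y = ∑ x ∈ S, ∑ y ∈ S, -c y x :=
    sum_congr rfl fun x _ => sum_congr rfl fun y _ => hc y x
  rw [sum_comm] at h
  simp only [sum_neg_distrib] at h
  rw [sum_comm]
  linarith

variable [Fintype V]

def netFlow (c : V → V → ℤ) (x : V) : ℤ := ∑ y, c x y

def excess (b : V → ℤ) (c : V → V → ℤ) (x : V) : ℤ := b x - netFlow c x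

def defect (b : V → ℤ) (c : V → V → ℤ) : ℕ := ∑ x, (excess b c x).natAbs

theorem sum_netFlow_eq_zero (hc : ∀ x y, c y x = -c x y) : ∑ x, netFlow c x = 0 :=
  sum_sum_eq_zero_of_skew hc univ

variable [DecidableEq V]

theorem sum_netFlow_eq_sum_sum_compl (hc : ∀ x y, c y x = -c x y) (S : Finset V) :
    ∑ x ∈ S, netFlow c x = ∑ x ∈ S, ∑ y ∈ Sᶜ, c x y := by
  simp only [netFlow, ← sum_add_sum_compl S, sum_add_distrib, sum_sum_eq_zero_of_skew hc, zero_add]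

theorem IsSkewFlow.neg_le_sum_netFlow (hc : IsSkewFlow r c) (S : Finset V) :
    -((r : ℤ) * #S * #Sᶜ) ≤ ∑ x ∈ S, netFlow c x := by
  rw [sum_netFlow_eq_sum_sum_compl hc.1]
  calc -((r : ℤ) * #S * #Sᶜ) = ∑ x ∈ S, ∑ y ∈ Sᶜ, -(r : ℤ) := by simp only [sum_neg_distrib, sum_const, Int.nsmul_eq_mul]; ring
    _ ≤ _ := sum_le_sum fun x _ => sum_le_sum fun y _ => by linarith [hc.1 x y, hc.2 y x]

theorem netFlow_augment (u w x : V) :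
    netFlow (augment c u w) x = netFlow c x + (if x = u then 1 else 0) - (if x = w then 1 else 0) := by
  simp [netFlow, augment, sum_add_distrib, sum_sub_distrib, ite_and]

theorem excess_augment (u w x : V) :
    excess b (augment c u w) x = excess b c x - (if x = u then 1 else 0) + (if x = w then 1 else 0) := by
  rw [excess, excess, netFlow_augment]
  ring

theorem defect_augment {u w : V} (huw : u ≠ w) :
    (defect b (augment c u w) : ℤ) = defect b c
      + (((excess b c u - 1).natAbs : ℤ) - (excess b c u).natAbs)
      + (((excess b c w + 1).natAbs : ℤ) - (excess b c w).natAbs) := by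
  have key : ∑ x, (((excess b (augment c u w) x).natAbs : ℤ) - (excess b c x).natAbs) =
      (((excess b c u - 1).natAbs : ℤ) - (excess b c u).natAbs)
        + (((excess b c w + 1).natAbs : ℤ) - (excess b c w).natAbs) := by
    rw [Fintype.sum_eq_add u w huw]
    · simp [excess_augment, huw, huw.symm]
    · rintro x ⟨hxu, hxw⟩
      simp [excess_augment, hxu, hxw]
  simp only [defect, Nat.cast_sum, sum_sub_distrib] at key ⊢
  linarith

theorem IsSkewFlow.exists_defect_lt_of_reflTransGen (F : Finset V) {u v : V}
    (hc : IsSkewFlow r c) (hu : 0 < excess b c u) (hv : excess b c v < 0)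
    (huv : ReflTransGen (fun x y => c x y < r ∧ x ∈ F) u v) :
    ∃ c', IsSkewFlow r c' ∧ defect b c' < defect b c := by
  induction F using Finset.strongInduction generalizing c u with
  | H F ih =>
  obtain ⟨w, hwu, ⟨huw, huF⟩, hwv⟩ := huv.exists_head_avoiding (by rintro rfl; omega)
  have hc' := isSkewFlow_augment hc hwu.symm huw
  have hdefect := defect_augment (b := b) (c := c) hwu.symm
  by_cases hw : excess b c w < 0
  · exact ⟨augment c u w, hc', by omega⟩
  -- The defect is unchanged and the positive excess has moved to `w`; the rest of the walk never
  -- leaves `u`, so it survives in the residual graph of the new flow, with `u` removed from `F`.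
  have hvu : v ≠ u := by rintro rfl; omega
  have hvw : v ≠ w := by rintro rfl; omega
  have hwv' : ReflTransGen (fun x y => augment c u w x y < r ∧ x ∈ F.erase u) w v :=
    ReflTransGen.mono (fun x y ⟨⟨hxy, hxF⟩, hxu⟩ =>
      ⟨(augment_le_of_ne hxu y).trans_lt hxy, mem_erase.2 ⟨hxu, hxF⟩⟩) _ _ hwv
  obtain ⟨d, hd, hlt⟩ := ih (F.erase u) (erase_ssubset huF) (u := w) hc'
    (by simp [excess_augment, hwu]; omega) (by simpa [excess_augment, hvu, hvw]) hwv'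
  exact ⟨d, hd, by omega⟩

theorem IsSkewFlow.exists_reflTransGen_of_excess_neg (hc : IsSkewFlow r c)
    (hb : ∀ S : Finset V, -((r : ℤ) * #S * #Sᶜ) ≤ ∑ x ∈ S, b x) {v : V}
    (hv : excess b c v < 0) : ∃ u, 0 < excess b c u ∧ ReflTransGen (fun x y => c x y < r) u v := by
  classical
  by_contra! hnone
  set R : Finset V := {x | ReflTransGen (fun x y => c x y < r) x v}
  have hvR : v ∈ R := by simp [R, ReflTransGen.refl]
  have hsat : ∀ y ∈ R, ∀ x ∈ Rᶜ, c y x = -r := by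
    intro y hy x hx
    simp only [R, mem_compl, mem_filter, mem_univ, true_and] at hy hx
    have : ¬ c x y < r := fun hxy => hx (ReflTransGen.head hxy hy)
    linarith [hc.1 x y, hc.2 x y]
  have hnet : ∑ y ∈ R, netFlow c y = -((r : ℤ) * #R * #Rᶜ) := by
    rw [sum_netFlow_eq_sum_sum_compl hc.1, sum_congr rfl fun y hy => sum_congr rfl (hsat y hy)]
    simp only [sum_neg_distrib, sum_const, Int.nsmul_eq_mul]
    ring
  have hex : ∑ y ∈ R, excess b c y < 0 := by
    refine (sum_lt_sum (g := 0) (fun y hy => ?_) ⟨v, hvR, hv⟩).trans_eq (by simp)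
    by_contra! h
    exact hnone y h (by simpa [R] using hy)
  simp only [excess, sum_sub_distrib] at hex
  linarith [hb R]

theorem exists_isSkewFlow_netFlow_eq (hsum : ∑ x, b x = 0)
    (hb : ∀ S : Finset V, -((r : ℤ) * #S * #Sᶜ) ≤ ∑ x ∈ S, b x) :
    ∃ c, IsSkewFlow r c ∧ netFlow c = b := by
  obtain ⟨c, hc, hmin⟩ := (measure (defect b)).wf.has_min {c | IsSkewFlow r c}
    ⟨0, by simp [IsSkewFlow]⟩
  refine ⟨c, hc, ?_⟩
  by_contra hne
  obtain ⟨v, hv⟩ : ∃ v, excess b c v < 0 := by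
    by_contra! hnonneg
    have hzero : ∑ x, excess b c x = 0 := by
      simp [excess, sum_sub_distrib, hsum, sum_netFlow_eq_zero hc.1]
    refine hne (funext fun x => ?_)
    have := (sum_eq_zero_iff_of_nonneg fun x _ => hnonneg x).1 hzero x (mem_univ x)
    simp only [excess] at this
    linarith
  obtain ⟨u, hu, huv⟩ := hc.exists_reflTransGen_of_excess_neg hb hv
  obtain ⟨c', hc', hlt⟩ := hc.exists_defect_lt_of_reflTransGen univ hu hv
    (ReflTransGen.mono (fun x _ hxy => ⟨hxy, mem_univ x⟩) _ _ huv)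
  exact hmin c' hc' hlt

end SkewFlow

section Digraph

variable {n r : ℕ}

def skew (A : Fin n → Fin n → ℕ) (x y : Fin n) : ℤ := A x y - A y x

theorem imbalance_eq_netFlow_skew (A : Fin n → Fin n → ℕ) : imbalance A = netFlow (skew A) := by
  ext v
  simp [imbalance, netFlow, skew]

theorem IsRDigraph.isSkewFlow_skew {A : Fin n → Fin n → ℕ} (hA : IsRDigraph n r A) :
    IsSkewFlow r (skew A) := by
  refine ⟨fun x y => by simp [skew], fun x y => ?_⟩
  by_cases hxy : x = y
  · simp [skew, hxy]
  · have := hA.2 x y hxy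
    simp only [skew]
    omega

theorem IsSkewFlow.isRDigraph_toNat {c : Fin n → Fin n → ℤ} (hc : IsSkewFlow r c) :
    IsRDigraph n r fun x y => (c x y).toNat := by
  refine ⟨fun x => ?_, fun x y _ => ?_⟩
  · have := hc.1 x x
    simp only [Int.toNat_eq_zero]
    omega
  · have := hc.1 x y
    have := hc.2 x y
    have := hc.2 y x
    show (c x y).toNat + (c y x).toNat ≤ r
    omega

theorem IsSkewFlow.imbalance_toNat {c : Fin n → Fin n → ℤ} (hc : IsSkewFlow r c) :
    imbalance (fun x y => (c x y).toNat) = netFlow c := by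
  ext x
  simp only [imbalance, netFlow, ← sum_sub_distrib]
  refine sum_congr rfl fun y _ => ?_
  have := hc.1 x y
  omega

theorem exists_isImbalanceSeq_iff (b : Fin n → ℤ) :
    (∃ A, IsImbalanceSeq n r A b) ↔
      (∀ S : Finset (Fin n), (r : ℤ) * #S * (#S - n) ≤ ∑ i ∈ S, b i) ∧ ∑ i, b i = 0 := by
  have hcompl (S : Finset (Fin n)) : ((#Sᶜ : ℕ) : ℤ) = n - #S := by
    rw [card_compl, Fintype.card_fin, Nat.cast_sub (by simpa using card_le_univ S)]
  constructor
  · rintro ⟨A, hA, σ, hσ⟩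
    have hb : b = netFlow (skew A) ∘ σ := by
      ext i
      rw [hσ, imbalance_eq_netFlow_skew, Function.comp_apply]
    subst hb
    refine ⟨fun S => ?_, ?_⟩
    · have := hA.isSkewFlow_skew.neg_le_sum_netFlow (S.map σ.toEmbedding)
      rw [sum_map, hcompl, card_map] at this
      simp only [Function.comp_apply, Equiv.coe_toEmbedding] at this ⊢
      linarith
    · simpa [Function.comp_apply] using
        (Equiv.sum_comp σ _).trans (sum_netFlow_eq_zero hA.isSkewFlow_skew.1)
  · rintro ⟨hb, hsum⟩
    obtain ⟨c, hc, hcb⟩ := exists_isSkewFlow_netFlow_eq (r := r) hsum fun S => by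
      rw [hcompl]
      linarith [hb S]
    exact ⟨_, hc.isRDigraph_toNat, 1, fun i => by rw [hc.imbalance_toNat, hcb]; rfl⟩

end Digraph

section PartialSums

variable {n : ℕ} {b : Fin n → ℤ}

theorem Fin.card_filter_val_lt_of_le {k : ℕ} (hk : k ≤ n) : #{i : Fin n | (i : ℕ) < k} = k := by
  rw [Fin.card_filter_val_lt, min_eq_right hk]

theorem psum_eq_sum (b : Fin n → ℤ) : psum b n = ∑ i, b i := by
  simp [psum]

theorem Monotone.psum_card_le_sum (hb : Monotone b) (S : Finset (Fin n)) :
    psum b #S ≤ ∑ i ∈ S, b i := by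
  refine sum_le_sum_of_card_eq (Fin.card_filter_val_lt_of_le ?_) fun i hi j hj => hb ?_
  · simpa using card_le_univ S
  · simp only [mem_sdiff, mem_filter, mem_univ, true_and] at hi hj
    exact Fin.le_def.2 (by omega)

theorem Monotone.forall_le_sum_iff_forall_le_psum (hb : Monotone b) (r : ℕ) :
    (∀ S : Finset (Fin n), (r : ℤ) * #S * (#S - n) ≤ ∑ i ∈ S, b i) ↔
      ∀ k : ℕ, 1 ≤ k → k ≤ n → (r : ℤ) * k * ((k : ℤ) - n) ≤ psum b k := by
  refine ⟨fun h k _ hkn => ?_, fun h S => ?_⟩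
  · simpa [psum, Fin.card_filter_val_lt_of_le hkn] using h {i : Fin n | (i : ℕ) < k}
  · rcases S.eq_empty_or_nonempty with rfl | hS
    · simp
    · exact (h #S hS.card_pos (by simpa using card_le_univ S)).trans (hb.psum_card_le_sum S)

end PartialSums

theorem stmt0_general (n r : ℕ) (b : Fin n → ℤ) (hmono : Monotone b) :
    (∃ A : Fin n → Fin n → ℕ, IsImbalanceSeq n r A b) ↔
      ((∀ k : ℕ, 1 ≤ k → k ≤ n → (r : ℤ) * k * ((k : ℤ) - n) ≤ psum b k) ∧
        psum b n = (r : ℤ) * n * ((n : ℤ) - n)) := by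
  rw [exists_isImbalanceSeq_iff, hmono.forall_le_sum_iff_forall_le_psum, psum_eq_sum]
  simp

/-- A non-decreasing integer sequence is the imbalance sequence of some r-digraph iff
every partial sum satisfies $\sum_{i=1}^k b_i \ge rk(k-n)$, with equality at $k=n$. -/
theorem stmt0 (n r : ℕ) (hn : 1 ≤ n) (hr : 1 ≤ r) (b : Fin n → ℤ) (hmono : Monotone b) :
    (∃ A : Fin n → Fin n → ℕ, IsImbalanceSeq n r A b) ↔
      ((∀ k : ℕ, 1 ≤ k → k ≤ n → (r : ℤ) * k * ((k : ℤ) - n) ≤ psum b k) ∧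
        psum b n = (r : ℤ) * n * ((n : ℤ) - n)) :=
  stmt0_general n r b hmono
end

section
/- If B = [b_1, ..., b_n] is the non-increasing imbalance sequence of an r-digraph, then for every k with 1 ≤ k ≤ n, the sum of squares b_1² + ... + b_k² is at most the sum (2rn − 2rk − b_1)² + ... + (2rn − 2rk − b_k)², with equality when k = n. -/
open Finset

/-! The total imbalance of a vertex set `S` only counts arcs leaving or entering `S`, and an
`r`-digraph has at most `r |S| (n - |S|)` of those leaving it. So the first `k` imbalances sum
to at most `r k (n - k)`, i.e. `2 ∑ bᵢ ≤ k c` for `c = 2r(n - k) ≥ 0`; expanding the square,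
`∑ (c - bᵢ)² = ∑ bᵢ² + k c² - 2c ∑ bᵢ ≥ ∑ bᵢ²`. -/

lemma sum_imbalance_eq_sum_compl {n : ℕ} (A : Fin n → Fin n → ℕ) (S : Finset (Fin n)) :
    ∑ v ∈ S, imbalance A v = ∑ v ∈ S, ∑ j ∈ Sᶜ, ((A v j : ℤ) - A j v) := by
  have split (v : Fin n) : imbalance A v =
      ∑ j ∈ S, ((A v j : ℤ) - A j v) + ∑ j ∈ Sᶜ, ((A v j : ℤ) - A j v) := by
    rw [sum_add_sum_compl, imbalance, sum_sub_distrib]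
  have internal : ∑ v ∈ S, ∑ j ∈ S, ((A v j : ℤ) - A j v) = 0 := by
    simp only [sum_sub_distrib]
    rw [sum_comm (s := S) (t := S) (f := fun v j => (A j v : ℤ)), sub_self]
  simp only [split, sum_add_distrib, internal, zero_add]

lemma IsRDigraph.sum_imbalance_le {n r : ℕ} {A : Fin n → Fin n → ℕ} (h : IsRDigraph n r A)
    (S : Finset (Fin n)) :
    ∑ v ∈ S, imbalance A v ≤ r * #S * #Sᶜ := by
  rw [sum_imbalance_eq_sum_compl]
  calc ∑ v ∈ S, ∑ j ∈ Sᶜ, ((A v j : ℤ) - A j v)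
      ≤ ∑ v ∈ S, ∑ j ∈ Sᶜ, (r : ℤ) := by
        refine sum_le_sum fun v hv => sum_le_sum fun j hj => ?_
        have hvj : v ≠ j := by rintro rfl; exact mem_compl.mp hj hv
        have := h.2 v j hvj
        omega
    _ = r * #S * #Sᶜ := by simp only [sum_const, nsmul_eq_mul]; ring

lemma IsImbalanceSeq.psum_le {n r : ℕ} {A : Fin n → Fin n → ℕ} {b : Fin n → ℤ}
    (h : IsImbalanceSeq n r A b) {k : ℕ} (hk : k ≤ n) :
    psum b k ≤ r * k * (n - k) := by
  obtain ⟨hA, σ, hσ⟩ := h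
  set T : Finset (Fin n) := univ.filter fun i : Fin n => (i : ℕ) < k
  have hT : #T = k := by rw [Fin.card_filter_val_lt, min_eq_right hk]
  have hcard : #(T.map σ.toEmbedding) = k := by rw [card_map, hT]
  have hcompl : (#(T.map σ.toEmbedding)ᶜ : ℤ) = n - k := by
    rw [card_compl, hcard, Fintype.card_fin, Nat.cast_sub hk]
  calc psum b k = ∑ v ∈ T.map σ.toEmbedding, imbalance A v := by
        rw [psum, sum_map]; exact sum_congr rfl fun i _ => hσ i
    _ ≤ r * k * (n - k) := by
        simpa only [hcard, hcompl] using hA.sum_imbalance_le (T.map σ.toEmbedding)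

lemma sum_sq_le_sum_sub_sq {ι : Type*} (s : Finset ι) (f : ι → ℤ) {c : ℤ} (hc : 0 ≤ c)
    (hsum : 2 * ∑ i ∈ s, f i ≤ #s * c) :
    ∑ i ∈ s, f i ^ 2 ≤ ∑ i ∈ s, (c - f i) ^ 2 := by
  have expand : ∑ i ∈ s, (c - f i) ^ 2 = ∑ i ∈ s, f i ^ 2 + (#s * c ^ 2 - 2 * c * ∑ i ∈ s, f i) := by
    simp only [sub_sq', sum_add_distrib, sum_sub_distrib, sum_const, nsmul_eq_mul, mul_sum]
    ring
  rw [expand]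
  nlinarith

theorem stmt4_general (n r : ℕ) (b : Fin n → ℤ)
    (hA : ∃ A : Fin n → Fin n → ℕ, IsImbalanceSeq n r A b) :
    (∀ k : ℕ, 1 ≤ k → k ≤ n →
      (∑ i ∈ Finset.univ.filter (fun i : Fin n => (i : ℕ) < k), (b i) ^ 2) ≤
        ∑ i ∈ Finset.univ.filter (fun i : Fin n => (i : ℕ) < k),
          (2 * (r : ℤ) * n - 2 * (r : ℤ) * k - b i) ^ 2) ∧
    (∑ i : Fin n, (b i) ^ 2) =
      ∑ i : Fin n, (2 * (r : ℤ) * n - 2 * (r : ℤ) * n - b i) ^ 2 := by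
  obtain ⟨A, hAb⟩ := hA
  refine ⟨fun k _ hk => ?_, by simp only [sub_self, zero_sub, even_two, Even.neg_pow]⟩
  have hkn : (k : ℤ) ≤ n := by exact_mod_cast hk
  apply sum_sq_le_sum_sub_sq
  · nlinarith [Int.natCast_nonneg r]
  · have := hAb.psum_le hk
    rw [psum] at this
    rw [Fin.card_filter_val_lt, min_eq_right hk]
    linarith

/-- For a non-increasing imbalance sequence of an r-digraph,
$\sum_{i=1}^k b_i^2 \le \sum_{i=1}^k (2rn-2rk-b_i)^2$ for all k, with equality at k = n. -/
theorem stmt4 (n r : ℕ) (hn : 1 ≤ n) (hr : 1 ≤ r) (b : Fin n → ℤ) (hanti : Antitone b)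
    (hA : ∃ A : Fin n → Fin n → ℕ, IsImbalanceSeq n r A b) :
    (∀ k : ℕ, 1 ≤ k → k ≤ n →
      (∑ i ∈ Finset.univ.filter (fun i : Fin n => (i : ℕ) < k), (b i) ^ 2) ≤
        ∑ i ∈ Finset.univ.filter (fun i : Fin n => (i : ℕ) < k),
          (2 * (r : ℤ) * n - 2 * (r : ℤ) * k - b i) ^ 2) ∧
    (∑ i : Fin n, (b i) ^ 2) =
      ∑ i : Fin n, (2 * (r : ℤ) * n - 2 * (r : ℤ) * n - b i) ^ 2 :=
  stmt4_general n r b hA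
end

section
/- Let p_1 < p_2 < ... < p_m and q_1 < q_2 < ... < q_n be positive integers whose greatest common divisor t satisfies 1 ≤ t ≤ r. Then there exists an r-digraph whose imbalance set (the set of distinct vertex imbalances) is exactly {p_1, ..., p_m} ∪ {−q_1, ..., −q_n}. -/
/-!
For every pair `(i, j)` take a disjoint copy of the complete bipartite digraph with `q j`
sources and `p i` sinks, one arc from each source to each sink. A source of that block has
imbalance `p i` and a sink `-q j`; every block has vertices of both kinds, and no two vertices
are joined by more than one arc.
-/

open Finset

section Relabel

variable {V : Type*} [Fintype V]

def imbalanceOn (B : V → V → ℕ) (v : V) : ℤ :=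
  (∑ w, (B v w : ℤ)) - ∑ w, (B w v : ℤ)

theorem imbalance_comp_equiv {N : ℕ} (B : V → V → ℕ) (e : Fin N ≃ V) :
    imbalance (fun i j => B (e i) (e j)) = imbalanceOn B ∘ e := by
  ext i
  rw [Function.comp_apply, imbalance, imbalanceOn, e.sum_comp (fun w => (B (e i) w : ℤ)),
    e.sum_comp (fun w => (B w (e i) : ℤ))]

theorem exists_rDigraph_of_fintype (r : ℕ) (B : V → V → ℕ) (hloop : ∀ v, B v v = 0)
    (hmult : ∀ u v, B u v + B v u ≤ r) :
    ∃ (N : ℕ) (A : Fin N → Fin N → ℕ), IsRDigraph N r A ∧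
      Set.range (imbalance A) = Set.range (imbalanceOn B) := by
  let e := (Fintype.equivFin V).symm
  refine ⟨_, fun i j => B (e i) (e j), ⟨fun i => hloop _, fun i j _ => hmult _ _⟩, ?_⟩
  rw [imbalance_comp_equiv, e.surjective.range_comp]

end Relabel

section BlockBipartite

variable {ι : Type*} [DecidableEq ι] (a b : ι → ℕ)

/-- Disjoint union over `k : ι` of complete bipartite digraphs, block `k` having sources
`Fin (a k)` and sinks `Fin (b k)`, with one arc from each source to each sink of its block. -/
def blockBipartite : (Σ k, Fin (a k) ⊕ Fin (b k)) → (Σ k, Fin (a k) ⊕ Fin (b k)) → ℕ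
  | ⟨k, .inl _⟩, ⟨k', .inr _⟩ => if k = k' then 1 else 0
  | _, _ => 0

theorem blockBipartite_self (v) : blockBipartite a b v v = 0 := by
  rcases v with ⟨k, x | x⟩ <;> rfl

theorem blockBipartite_add_swap_le_one (u v) :
    blockBipartite a b u v + blockBipartite a b v u ≤ 1 := by
  rcases u with ⟨k, x | x⟩ <;> rcases v with ⟨k', y | y⟩ <;>
    simp only [blockBipartite] <;> grind

variable [Fintype ι]

theorem imbalanceOn_blockBipartite_inl (k : ι) (x : Fin (a k)) :
    imbalanceOn (blockBipartite a b) ⟨k, .inl x⟩ = b k := by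
  simp [imbalanceOn, Fintype.sum_sigma, Fintype.sum_sum_type, blockBipartite]

theorem imbalanceOn_blockBipartite_inr (k : ι) (y : Fin (b k)) :
    imbalanceOn (blockBipartite a b) ⟨k, .inr y⟩ = -(a k : ℤ) := by
  simp [imbalanceOn, Fintype.sum_sigma, Fintype.sum_sum_type, blockBipartite]

theorem range_imbalanceOn_blockBipartite (ha : ∀ k, 0 < a k) (hb : ∀ k, 0 < b k) :
    Set.range (imbalanceOn (blockBipartite a b)) =
      Set.range (fun k => (b k : ℤ)) ∪ Set.range (fun k => -(a k : ℤ)) := by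
  ext z
  constructor
  · rintro ⟨⟨k, x | y⟩, rfl⟩
    · exact .inl ⟨k, (imbalanceOn_blockBipartite_inl a b k x).symm⟩
    · exact .inr ⟨k, (imbalanceOn_blockBipartite_inr a b k y).symm⟩
  · rintro (⟨k, rfl⟩ | ⟨k, rfl⟩)
    · exact ⟨⟨k, .inl ⟨0, ha k⟩⟩, imbalanceOn_blockBipartite_inl a b k _⟩
    · exact ⟨⟨k, .inr ⟨0, hb k⟩⟩, imbalanceOn_blockBipartite_inr a b k _⟩

end BlockBipartite

theorem stmt10_general (m n r t : ℕ) (hm : 1 ≤ m) (hn : 1 ≤ n)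
    (p : Fin m → ℕ) (q : Fin n → ℕ)
    (hppos : ∀ i, 0 < p i) (hqpos : ∀ j, 0 < q j)
    (ht1 : 1 ≤ t) (htr : t ≤ r) :
    ∃ (N : ℕ) (A : Fin N → Fin N → ℕ), IsRDigraph N r A ∧
      Set.range (imbalance A) =
        Set.range (fun i : Fin m => (p i : ℤ)) ∪
          Set.range (fun j : Fin n => -(q j : ℤ)) := by
  have : Nonempty (Fin m) := Fin.pos_iff_nonempty.mp hm
  have : Nonempty (Fin n) := Fin.pos_iff_nonempty.mp hn
  obtain ⟨N, A, hA, hrange⟩ := exists_rDigraph_of_fintype r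
    (blockBipartite (fun k : Fin m × Fin n => q k.2) (fun k => p k.1)) (blockBipartite_self _ _)
    fun u v => (blockBipartite_add_swap_le_one _ _ u v).trans (ht1.trans htr)
  refine ⟨N, A, hA, ?_⟩
  rw [hrange, range_imbalanceOn_blockBipartite (fun k : Fin m × Fin n => q k.2) (fun k => p k.1)
    (fun k => hqpos k.2) (fun k => hppos k.1)]
  exact congr_arg₂ (· ∪ ·) (Prod.fst_surjective.range_comp fun i => (p i : ℤ))
    (Prod.snd_surjective.range_comp fun j => -(q j : ℤ))

/-- Existence of an r-digraph with a prescribed imbalance set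
$\{p_1,\dots,p_m\} \cup \{-q_1,\dots,-q_n\}$, provided the gcd t of all the
$p_i, q_j$ satisfies $1 \le t \le r$. -/
theorem stmt10 (m n r t : ℕ) (hm : 1 ≤ m) (hn : 1 ≤ n)
    (p : Fin m → ℕ) (q : Fin n → ℕ)
    (hp : StrictMono p) (hq : StrictMono q)
    (hppos : ∀ i, 0 < p i) (hqpos : ∀ j, 0 < q j)
    (ht : t = Nat.gcd (Finset.univ.gcd p) (Finset.univ.gcd q))
    (ht1 : 1 ≤ t) (htr : t ≤ r) :
    ∃ (N : ℕ) (A : Fin N → Fin N → ℕ), IsRDigraph N r A ∧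
      Set.range (imbalance A) =
        Set.range (fun i : Fin m => (p i : ℤ)) ∪
          Set.range (fun j : Fin n => -(q j : ℤ)) :=
  stmt10_general m n r t hm hn p q hppos hqpos ht1 htr
end

section
/- Among all r-digraphs realizing a fixed imbalance sequence B, any realization with the minimum number of arcs is transitive, i.e., contains no intransitive oriented triple and no pair of oppositely directed arcs between two vertices. -/
open Finset

/-- Total number of arcs. -/
def arcCount {n : ℕ} (A : Fin n → Fin n → ℕ) : ℕ := ∑ i, ∑ j, A i j

/-! Each forbidden configuration can be rewired into an r-digraph with the same imbalances and
fewer arcs: delete a pair of opposite arcs, delete a directed 3-cycle, or replace a path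
`u → v → w` without arcs between `u` and `w` by the single arc `u → w`. Every such move is a
composition of single-arc changes, each shifting the imbalances of its endpoints by `±1`. -/

variable {n r : ℕ}

def shiftArc (A : Fin n → Fin n → ℕ) (u v : Fin n) (c : ℤ) : Fin n → Fin n → ℕ :=
  fun i j => if i = u ∧ j = v then ((A u v : ℤ) + c).toNat else A i j

section shiftArc

variable {A : Fin n → Fin n → ℕ} {u v : Fin n} {c : ℤ}

lemma shiftArc_apply_of_ne {i j : Fin n} (h : ¬(i = u ∧ j = v)) : shiftArc A u v c i j = A i j :=
  if_neg h

lemma shiftArc_cast (h : 0 ≤ (A u v : ℤ) + c) (i j : Fin n) :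
    (shiftArc A u v c i j : ℤ) = A i j + if i = u ∧ j = v then c else 0 := by
  unfold shiftArc
  split_ifs with hij
  · obtain ⟨rfl, rfl⟩ := hij
    exact Int.toNat_of_nonneg h
  · simp

lemma imbalance_shiftArc (h : 0 ≤ (A u v : ℤ) + c) (x : Fin n) :
    imbalance (shiftArc A u v c) x =
      imbalance A x + c * ((if x = u then 1 else 0) - if x = v then 1 else 0) := by
  simp only [imbalance, shiftArc_cast h, sum_add_distrib, ite_and, sum_ite_irrel,
    sum_ite_eq', mem_univ, if_true, sum_const_zero]
  split_ifs <;> ring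

lemma arcCount_shiftArc (h : 0 ≤ (A u v : ℤ) + c) :
    (arcCount (shiftArc A u v c) : ℤ) = arcCount A + c := by
  simp [arcCount, shiftArc_cast h, sum_add_distrib, ite_and]

lemma isRDigraph_shiftArc (hA : IsRDigraph n r A) (huv : u ≠ v) (h : 0 ≤ (A u v : ℤ) + c)
    (hr : (A u v : ℤ) + A v u + c ≤ r) : IsRDigraph n r (shiftArc A u v c) := by
  refine ⟨fun i => ?_, fun i j hij => ?_⟩
  · rw [shiftArc_apply_of_ne fun h => huv (h.1.symm.trans h.2), hA.1]
  · have hb := hA.2 i j hij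
    zify at hb ⊢
    rw [shiftArc_cast h, shiftArc_cast h]
    by_cases h₁ : i = u ∧ j = v
    · obtain ⟨rfl, rfl⟩ := h₁
      simp only [and_self, if_true, huv.symm, false_and, if_false]
      omega
    by_cases h₂ : i = v ∧ j = u
    · obtain ⟨rfl, rfl⟩ := h₂
      simp only [and_self, if_true, huv]
      omega
    · simp only [h₁, if_false, show ¬(j = u ∧ i = v) from fun h => h₂ ⟨h.2, h.1⟩]
      omega

lemma isRDigraph_shiftArc_neg_one (hA : IsRDigraph n r A) (huv : u ≠ v) (h : 1 ≤ A u v) :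
    IsRDigraph n r (shiftArc A u v (-1)) :=
  isRDigraph_shiftArc hA huv (by omega) (by have := hA.2 u v huv; omega)

end shiftArc

def IsArcMinimal (n r : ℕ) (A : Fin n → Fin n → ℕ) : Prop :=
  IsRDigraph n r A ∧
    ∀ A', IsRDigraph n r A' → imbalance A' = imbalance A → arcCount A ≤ arcCount A'

lemma isArcMinimal_of_forall_arcCount_le {b : Fin n → ℤ} {A : Fin n → Fin n → ℕ}
    (hA : IsImbalanceSeq n r A b)
    (hmin : ∀ A' : Fin n → Fin n → ℕ, IsImbalanceSeq n r A' b → arcCount A ≤ arcCount A') :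
    IsArcMinimal n r A := by
  obtain ⟨hA, σ, hσ⟩ := hA
  exact ⟨hA, fun A' hA' himb => hmin A' ⟨hA', σ, fun i => by rw [hσ i, himb]⟩⟩

namespace IsArcMinimal

variable {A : Fin n → Fin n → ℕ} (hA : IsArcMinimal n r A) {u v w : Fin n}
include hA

lemma nonneg_of_arcCount_eq {A' : Fin n → Fin n → ℕ} (hA' : IsRDigraph n r A')
    (himb : imbalance A' = imbalance A) {d : ℤ} (hd : (arcCount A' : ℤ) = arcCount A + d) :
    0 ≤ d := by
  have := hA.2 A' hA' himb
  omega

theorem not_opposite_arcs (huv : u ≠ v) : ¬(1 ≤ A u v ∧ 1 ≤ A v u) := by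
  rintro ⟨huv₁, hvu₁⟩
  set A₁ := shiftArc A u v (-1)
  have hvu : A₁ v u = A v u := shiftArc_apply_of_ne fun h => huv h.2
  have h₁ : 0 ≤ (A u v : ℤ) + -1 := by omega
  have h₂ : 0 ≤ (A₁ v u : ℤ) + -1 := by omega
  have hr₂ : IsRDigraph n r (shiftArc A₁ v u (-1)) :=
    isRDigraph_shiftArc_neg_one (isRDigraph_shiftArc_neg_one hA.1 huv huv₁) huv.symm
      (hvu₁.trans hvu.ge)
  have himb : imbalance (shiftArc A₁ v u (-1)) = imbalance A := by
    ext x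
    rw [imbalance_shiftArc h₂, imbalance_shiftArc h₁]
    ring
  have := hA.nonneg_of_arcCount_eq hr₂ himb (d := -2) <| by
    rw [arcCount_shiftArc h₂, arcCount_shiftArc h₁]
    ring
  omega

theorem not_cyclic_triple (huv : u ≠ v) (hvw : v ≠ w) (huw : u ≠ w) :
    ¬(1 ≤ A u v ∧ 1 ≤ A v w ∧ 1 ≤ A w u) := by
  rintro ⟨huv₁, hvw₁, hwu₁⟩
  set A₁ := shiftArc A u v (-1)
  set A₂ := shiftArc A₁ v w (-1)
  have hvw' : A₁ v w = A v w := shiftArc_apply_of_ne fun h => huv h.1.symm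
  have hwu' : A₂ w u = A w u :=
    (shiftArc_apply_of_ne fun h => hvw h.1.symm).trans (shiftArc_apply_of_ne fun h => huw h.1.symm)
  have h₁ : 0 ≤ (A u v : ℤ) + -1 := by omega
  have h₂ : 0 ≤ (A₁ v w : ℤ) + -1 := by omega
  have h₃ : 0 ≤ (A₂ w u : ℤ) + -1 := by omega
  have hr₂ : IsRDigraph n r A₂ :=
    isRDigraph_shiftArc_neg_one (isRDigraph_shiftArc_neg_one hA.1 huv huv₁) hvw
      (hvw₁.trans hvw'.ge)
  have hr₃ : IsRDigraph n r (shiftArc A₂ w u (-1)) :=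
    isRDigraph_shiftArc_neg_one hr₂ huw.symm (hwu₁.trans hwu'.ge)
  have himb : imbalance (shiftArc A₂ w u (-1)) = imbalance A := by
    ext x
    rw [imbalance_shiftArc h₃, imbalance_shiftArc h₂, imbalance_shiftArc h₁]
    ring
  have := hA.nonneg_of_arcCount_eq hr₃ himb (d := -3) <| by
    rw [arcCount_shiftArc h₃, arcCount_shiftArc h₂, arcCount_shiftArc h₁]
    ring
  omega

theorem not_intransitive_path (huv : u ≠ v) (hvw : v ≠ w) (huw : u ≠ w) :
    ¬(1 ≤ A u v ∧ 1 ≤ A v w ∧ A u w = 0 ∧ A w u = 0) := by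
  rintro ⟨huv₁, hvw₁, huw₀, hwu₀⟩
  set A₁ := shiftArc A u v (-1)
  set A₂ := shiftArc A₁ v w (-1)
  have hvw' : A₁ v w = A v w := shiftArc_apply_of_ne fun h => huv h.1.symm
  have huw' : A₂ u w = 0 :=
    ((shiftArc_apply_of_ne fun h => huv h.1).trans (shiftArc_apply_of_ne fun h => hvw h.2.symm)).trans
      huw₀
  have hwu' : A₂ w u = 0 :=
    ((shiftArc_apply_of_ne fun h => hvw h.1.symm).trans
      (shiftArc_apply_of_ne fun h => huw h.1.symm)).trans hwu₀
  have h₁ : 0 ≤ (A u v : ℤ) + -1 := by omega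
  have h₂ : 0 ≤ (A₁ v w : ℤ) + -1 := by omega
  have h₃ : 0 ≤ (A₂ u w : ℤ) + 1 := by omega
  have hr₂ : IsRDigraph n r A₂ :=
    isRDigraph_shiftArc_neg_one (isRDigraph_shiftArc_neg_one hA.1 huv huv₁) hvw
      (hvw₁.trans hvw'.ge)
  have hr₃ : IsRDigraph n r (shiftArc A₂ u w 1) :=
    isRDigraph_shiftArc hr₂ huw h₃ (by have := hA.1.2 u v huv; omega)
  have himb : imbalance (shiftArc A₂ u w 1) = imbalance A := by
    ext x
    rw [imbalance_shiftArc h₃, imbalance_shiftArc h₂, imbalance_shiftArc h₁]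
    ring
  have := hA.nonneg_of_arcCount_eq hr₃ himb (d := -1) <| by
    rw [arcCount_shiftArc h₃, arcCount_shiftArc h₂, arcCount_shiftArc h₁]
    ring
  omega

end IsArcMinimal

/-- Any realization of an imbalance sequence with the minimum number of arcs is transitive:
it has no pair of oppositely directed arcs, no directed 3-cycle, and no directed path
u→v→w with no arcs between u and w. -/
theorem stmt13 (n r : ℕ) (b : Fin n → ℤ) (A : Fin n → Fin n → ℕ)
    (hA : IsImbalanceSeq n r A b)
    (hmin : ∀ A' : Fin n → Fin n → ℕ, IsImbalanceSeq n r A' b → arcCount A ≤ arcCount A') :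
    (∀ u v : Fin n, u ≠ v → ¬(1 ≤ A u v ∧ 1 ≤ A v u)) ∧
    (∀ u v w : Fin n, u ≠ v → v ≠ w → u ≠ w →
      ¬(1 ≤ A u v ∧ 1 ≤ A v w ∧ 1 ≤ A w u) ∧
      ¬(1 ≤ A u v ∧ 1 ≤ A v w ∧ A u w = 0 ∧ A w u = 0)) := by
  have hA := isArcMinimal_of_forall_arcCount_le hA hmin
  exact ⟨fun u v huv => hA.not_opposite_arcs huv, fun u v w huv hvw huw =>
    ⟨hA.not_cyclic_triple huv hvw huw, hA.not_intransitive_path huv hvw huw⟩⟩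
end

section
/- Let n ≥ 2, r ≥ 1 and let b_1 ≤ ... ≤ b_n be the imbalance sequence of an r-digraph D with b_n > b_1 + 1, where vertex v_1 has imbalance b_1 and vertex v_n has imbalance b_n. Then there exists an r-digraph D' on the same vertex set whose imbalance sequence is b_1+1, b_2, ..., b_{n−1}, b_n−1 (re-sorted if necessary). -/
open Finset

/-!
To move one unit of imbalance from `u` to `w` it suffices to delete an arc `u → w` or to add an
arc `w → u`; this is impossible only when all `r` arcs between them run from `w` to `u`, i.e. the
net flow from `u` to `w` is `-r`. Then
`∑_{p ≠ u, w} (net u p - net w p) = imbalance A u - imbalance A w + 2 r > 0`,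
so some third vertex `p` has `net u p > net w p`. As every pair carries at most `r` arcs, this
forces both pairs `{u, p}` and `{p, w}` to admit a one-arc move, and the unit travels `u → p → w`.
-/

section

variable {n r : ℕ}

def net (A : Fin n → Fin n → ℕ) (x y : Fin n) : ℤ := A x y - A y x

lemma imbalance_eq_sum_net (A : Fin n → Fin n → ℕ) (v : Fin n) :
    imbalance A v = ∑ j, net A v j := by
  simp only [imbalance, net, sum_sub_distrib]

lemma sum_net_sub_net_compl_pair (A : Fin n → Fin n → ℕ) {u w : Fin n} (huw : u ≠ w) :
    ∑ p ∈ univ \ {u, w}, (net A u p - net A w p) =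
      imbalance A u - imbalance A w - 2 * net A u w := by
  rw [sum_sdiff_eq_sub (subset_univ _), sum_pair huw, sum_sub_distrib,
    ← imbalance_eq_sum_net, ← imbalance_eq_sum_net]
  simp only [net]
  ring

def Shiftable (r : ℕ) (A : Fin n → Fin n → ℕ) (u w : Fin n) : Prop :=
  0 < A u w ∨ A u w + A w u < r

def moveUnit (A : Fin n → Fin n → ℕ) (u w : Fin n) : Fin n → Fin n → ℕ :=
  if 0 < A u w then fun i j => if i = u ∧ j = w then A i j - 1 else A i j
  else fun i j => if i = w ∧ j = u then A i j + 1 else A i j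

lemma moveUnit_apply_of_ne (A : Fin n → Fin n → ℕ) {u w i j : Fin n}
    (h₁ : ¬(i = u ∧ j = w)) (h₂ : ¬(i = w ∧ j = u)) : moveUnit A u w i j = A i j := by
  unfold moveUnit
  split_ifs <;> simp only [if_neg h₁, if_neg h₂]

lemma imbalance_eq_of_entry_change {A A' : Fin n → Fin n → ℕ} {a b : Fin n} {c : ℤ}
    (h : ∀ i j, (A' i j : ℤ) = A i j + c * if i = a ∧ j = b then 1 else 0) (v : Fin n) :
    imbalance A' v =
      imbalance A v + c * (if v = a then 1 else 0) - c * (if v = b then 1 else 0) := by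
  have out : ∑ j, (if v = a ∧ j = b then (1 : ℤ) else 0) = if v = a then 1 else 0 := by
    by_cases ha : v = a <;> simp [ha]
  have into : ∑ i, (if i = a ∧ v = b then (1 : ℤ) else 0) = if v = b then 1 else 0 := by
    by_cases hb : v = b <;> simp [hb]
  simp only [imbalance, h, sum_add_distrib, ← mul_sum, out, into]
  ring

lemma imbalance_moveUnit (A : Fin n → Fin n → ℕ) (u w v : Fin n) :
    imbalance (moveUnit A u w) v =
      imbalance A v - (if v = u then 1 else 0) + (if v = w then 1 else 0) := by
  by_cases h : 0 < A u w
  · rw [imbalance_eq_of_entry_change (a := u) (b := w) (c := -1) (fun i j => ?_)]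
    · ring
    by_cases hij : i = u ∧ j = w
    · obtain ⟨rfl, rfl⟩ := hij
      simp [moveUnit, h]
      omega
    · simp [moveUnit, h, hij]
  · rw [imbalance_eq_of_entry_change (a := w) (b := u) (c := 1) (fun i j => ?_)]
    · ring
    by_cases hij : i = w ∧ j = u
    · obtain ⟨rfl, rfl⟩ := hij
      simp [moveUnit, h]
    · simp [moveUnit, h, hij]

lemma isRDigraph_moveUnit {A : Fin n → Fin n → ℕ} (hA : IsRDigraph n r A) {u w : Fin n}
    (huw : u ≠ w) (hs : Shiftable r A u w) : IsRDigraph n r (moveUnit A u w) := by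
  obtain ⟨hloop, hpair⟩ := hA
  refine ⟨fun i => ?_, fun i j hij => ?_⟩
  · rw [moveUnit_apply_of_ne A (fun h => huw (h.1.symm.trans h.2))
      (fun h => huw (h.2.symm.trans h.1))]
    exact hloop i
  · by_cases hij' : (i = u ∧ j = w) ∨ (i = w ∧ j = u)
    · have := hpair u w huw
      unfold Shiftable at hs
      rcases hij' with ⟨rfl, rfl⟩ | ⟨rfl, rfl⟩ <;>
        simp only [moveUnit] <;> split_ifs <;> simp [hij, hij.symm] <;> omega
    · simp only [not_or, not_and] at hij'
      rw [moveUnit_apply_of_ne A (fun h => hij'.1 h.1 h.2) (fun h => hij'.2 h.1 h.2),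
        moveUnit_apply_of_ne A (fun h => hij'.2 h.2 h.1) (fun h => hij'.1 h.2 h.1)]
      exact hpair i j hij

lemma shiftable_moveUnit_iff (A : Fin n → Fin n → ℕ) {u p w : Fin n} (hpu : p ≠ u)
    (hwu : w ≠ u) (hwp : w ≠ p) : Shiftable r (moveUnit A u p) p w ↔ Shiftable r A p w := by
  rw [Shiftable, Shiftable, moveUnit_apply_of_ne A (fun h => hpu h.1) (fun h => hwu h.2),
    moveUnit_apply_of_ne A (fun h => hwu h.1) (fun h => hwp h.1)]

lemma net_eq_neg_of_not_shiftable {A : Fin n → Fin n → ℕ} (hA : IsRDigraph n r A)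
    {u w : Fin n} (huw : u ≠ w) (h : ¬Shiftable r A u w) : net A u w = -r := by
  have := hA.2 u w huw
  simp only [Shiftable, not_or, not_lt] at h
  simp only [net]
  omega

lemma shiftable_of_net_sub_net_pos {A : Fin n → Fin n → ℕ} (hA : IsRDigraph n r A)
    {u p w : Fin n} (hpu : p ≠ u) (hpw : p ≠ w) (h : 0 < net A u p - net A w p) :
    Shiftable r A u p ∧ Shiftable r A p w := by
  have := hA.2 u p hpu.symm
  have := hA.2 p w hpw
  simp only [Shiftable, net] at h ⊢
  omega

lemma exists_shiftable_relay {A : Fin n → Fin n → ℕ} (hA : IsRDigraph n r A) {u w : Fin n}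
    (huw : u ≠ w) (hlt : imbalance A w < imbalance A u) (hs : ¬Shiftable r A u w) :
    ∃ p, p ≠ u ∧ p ≠ w ∧ Shiftable r A u p ∧ Shiftable r A p w := by
  have hsum : 0 < ∑ p ∈ univ \ {u, w}, (net A u p - net A w p) := by
    rw [sum_net_sub_net_compl_pair A huw, net_eq_neg_of_not_shiftable hA huw hs]
    omega
  obtain ⟨p, hp, hpos⟩ := exists_lt_of_sum_lt (sum_const_zero.trans_lt hsum)
  simp only [mem_sdiff, mem_univ, mem_insert, mem_singleton, true_and, not_or] at hp
  exact ⟨p, hp.1, hp.2, shiftable_of_net_sub_net_pos hA hp.1 hp.2 hpos⟩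

theorem exists_isRDigraph_imbalance_sub_add {A : Fin n → Fin n → ℕ} (hA : IsRDigraph n r A)
    {u w : Fin n} (huw : u ≠ w) (hlt : imbalance A w < imbalance A u) :
    ∃ A', IsRDigraph n r A' ∧ ∀ v, imbalance A' v =
      imbalance A v - (if v = u then 1 else 0) + (if v = w then 1 else 0) := by
  by_cases hs : Shiftable r A u w
  · exact ⟨moveUnit A u w, isRDigraph_moveUnit hA huw hs, imbalance_moveUnit A u w⟩
  obtain ⟨p, hpu, hpw, hup, hpw'⟩ := exists_shiftable_relay hA huw hlt hs
  have hA₁ := isRDigraph_moveUnit hA hpu.symm hup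
  have hs₁ := (shiftable_moveUnit_iff A hpu huw.symm hpw.symm).2 hpw'
  refine ⟨moveUnit (moveUnit A u p) p w, isRDigraph_moveUnit hA₁ hpw hs₁, fun v => ?_⟩
  rw [imbalance_moveUnit, imbalance_moveUnit]
  ring

end

/-- Arc-switching step: if an r-digraph has non-decreasing imbalance sequence b with
$b_n > b_1 + 1$, then there is an r-digraph on the same vertex set whose imbalance
sequence (after re-sorting) is $b_1 + 1, b_2, \dots, b_{n-1}, b_n - 1$. -/
theorem stmt17 (n r : ℕ) (hn : 2 ≤ n) (b : Fin n → ℤ)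
    (A : Fin n → Fin n → ℕ) (hA : IsImbalanceSeq n r A b)
    (hgap : b ⟨0, by omega⟩ + 1 < b ⟨n - 1, by omega⟩) :
    ∃ A' : Fin n → Fin n → ℕ,
      IsImbalanceSeq n r A'
        (Function.update (Function.update b ⟨0, by omega⟩ (b ⟨0, by omega⟩ + 1))
          ⟨n - 1, by omega⟩ (b ⟨n - 1, by omega⟩ - 1)) := by
  obtain ⟨hR, σ, hσ⟩ := hA
  set lo : Fin n := ⟨0, by omega⟩
  set hi : Fin n := ⟨n - 1, by omega⟩
  have hne : lo ≠ hi := Fin.ne_of_val_ne (by simp only [lo, hi]; omega)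
  obtain ⟨A', hA', himb⟩ := exists_isRDigraph_imbalance_sub_add hR (σ.injective.ne hne.symm)
    (by rw [← hσ, ← hσ]; omega)
  refine ⟨A', hA', σ, fun i => ?_⟩
  rw [himb, ← hσ]
  simp only [σ.injective.eq_iff]
  rcases eq_or_ne i hi with rfl | hhi
  · simp [hne.symm]
  rcases eq_or_ne i lo with rfl | hlo
  · simp [hne]
  · simp [hhi, hlo]
end
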